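/- arXiv:1905.04927 — 3 statements merged into one kernel-verified Lean document; each statement's English description precedes it below -/
import Mathlib

section
/- If φ = (φ₁, φ₂) is a pair of continuously differentiable complex-valued functions on a neighborhood of the origin in ℂ², satisfying x₁·φ₁(x) + x₂·φ₂(x) = 0 for all x = (x₁,x₂), then there exists a continuous function ψ on a (possibly smaller) neighborhood of the origin such that φ₁ = -x₂·ψ and φ₂ = x₁·ψ. -/
/-!
Differentiating the relation along real rays through the origin shows that `φ` vanishes at `0`
and that its derivative there is a multiple of the Koszul syzygy: `dφ₁(0) = -a x₂` and
`dφ₂(0) = a x₁` for some `a`. The remainders `r₁ = φ₁ + a x₂`, `r₂ = φ₂ - a x₁` are `o(‖x‖)`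
and still satisfy `x₁ r₁ + x₂ r₂ = 0`, so the quotient `(x̄₁ r₂ - x̄₂ r₁) / (|x₁|² + |x₂|²)`,
which divides `r` by the syzygy away from the origin, is `o(‖x‖²) / ‖x‖²` and tends to `0`.
Hence `ψ = a + (x̄₁ r₂ - x̄₂ r₁) / (|x₁|² + |x₂|²)` works.
-/

open Filter Topology Asymptotics ComplexConjugate

theorem HasDerivAt.eq_zero_and_eq_zero_of_eventuallyEq_nhdsNE {𝕜 F : Type*}
    [NontriviallyNormedField 𝕜] [NormedAddCommGroup F] [NormedSpace 𝕜 F] {f : 𝕜 → F} {f' : F}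
    {x : 𝕜} (hf : HasDerivAt f f' x) (h : f =ᶠ[𝓝[≠] x] 0) : f x = 0 ∧ f' = 0 := by
  have hfx : f x = 0 :=
    tendsto_nhds_unique (hf.continuousAt.tendsto.mono_left nhdsWithin_le_nhds)
      (tendsto_const_nhds.congr' h.symm)
  exact ⟨hfx, hf.unique ((hasDerivAt_const x 0).congr_of_eventuallyEq
    (eventuallyEq_nhds_of_eventuallyEq_nhdsNE h hfx))⟩

theorem exists_koszul_multiple_of_fst_mul_add_snd_mul_eq_zero {R F : Type*} [CommRing R]
    [NoZeroDivisors R] [FunLike F (R × R) R] [AddMonoidHomClass F (R × R) R] (L₁ L₂ : F)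
    (h : ∀ v : R × R, v.1 * L₁ v + v.2 * L₂ v = 0) :
    ∃ a : R, ∀ v : R × R, L₁ v = -a * v.2 ∧ L₂ v = a * v.1 := by
  have split (L : F) (v : R × R) : L v = L (v.1, 0) + L (0, v.2) := by
    rw [← map_add, Prod.mk_add_mk, add_zero, zero_add]
  have hL₁ (u : R) : L₁ (u, 0) = 0 := by
    rcases eq_or_ne u 0 with rfl | hu
    · exact map_zero L₁
    · simpa [hu] using h (u, 0)
  have hL₂ (w : R) : L₂ (0, w) = 0 := by
    rcases eq_or_ne w 0 with rfl | hw
    · exact map_zero L₂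
    · simpa [hw] using h (0, w)
  refine ⟨L₂ (1, 0), fun v => ⟨?_, ?_⟩⟩
  · have := h (1, v.2)
    rw [split L₁, split L₂, hL₁, hL₂] at this
    rw [split L₁, hL₁]
    linear_combination this
  · have h' := h (v.1, 1)
    have h'' := h (1, 1)
    rw [split L₁, split L₂, hL₁, hL₂] at h' h''
    rw [split L₂, hL₂]
    linear_combination h' - v.1 * h''

theorem Prod.norm_sq_le_norm_fst_sq_add_norm_snd_sq {E F : Type*} [SeminormedAddCommGroup E]
    [SeminormedAddCommGroup F] (x : E × F) : ‖x‖ ^ 2 ≤ ‖x.1‖ ^ 2 + ‖x.2‖ ^ 2 := by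
  rcases max_choice ‖x.1‖ ‖x.2‖ with h | h <;> rw [Prod.norm_def, h]
  exacts [le_add_of_nonneg_right (sq_nonneg _), le_add_of_nonneg_left (sq_nonneg _)]

section Koszul

variable {𝕜 : Type*} [RCLike 𝕜] {φ₁ φ₂ : 𝕜 × 𝕜 → 𝕜}

theorem koszul_relation_along_ray {L₁ L₂ : 𝕜 × 𝕜 →L[ℝ] 𝕜} (hL₁ : HasFDerivAt φ₁ L₁ 0)
    (hL₂ : HasFDerivAt φ₂ L₂ 0) (hrel : ∀ᶠ x in 𝓝 0, x.1 * φ₁ x + x.2 * φ₂ x = 0)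
    (v : 𝕜 × 𝕜) : v.1 * φ₁ 0 + v.2 * φ₂ 0 = 0 ∧ v.1 * L₁ v + v.2 * L₂ v = 0 := by
  have hray : HasDerivAt (fun t : ℝ => t • v) v 0 := by
    simpa using (hasDerivAt_id (0 : ℝ)).smul_const v
  have hL₁' : HasFDerivAt φ₁ L₁ ((0 : ℝ) • v) := by rwa [zero_smul]
  have hL₂' : HasFDerivAt φ₂ L₂ ((0 : ℝ) • v) := by rwa [zero_smul]
  have hderiv : HasDerivAt (fun t : ℝ => v.1 * φ₁ (t • v) + v.2 * φ₂ (t • v))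
      (v.1 * L₁ v + v.2 * L₂ v) 0 :=
    ((hL₁'.comp_hasDerivAt 0 hray).const_mul v.1).add
      ((hL₂'.comp_hasDerivAt 0 hray).const_mul v.2)
  have hzero : (fun t : ℝ => v.1 * φ₁ (t • v) + v.2 * φ₂ (t • v)) =ᶠ[𝓝[≠] 0] 0 := by
    have hcont : Tendsto (fun t : ℝ => t • v) (𝓝 0) (𝓝 0) := by
      simpa using hray.continuousAt.tendsto
    filter_upwards [self_mem_nhdsWithin, nhdsWithin_le_nhds (hcont.eventually hrel)] with t ht hrel_t
    have ht' : (t : 𝕜) ≠ 0 := by exact_mod_cast ht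
    simp only [Prod.smul_fst, Prod.smul_snd, RCLike.real_smul_eq_coe_mul] at hrel_t
    refine (mul_eq_zero.mp ?_).resolve_left ht'
    linear_combination hrel_t
  simpa using hderiv.eq_zero_and_eq_zero_of_eventuallyEq_nhdsNE hzero

theorem exists_isLittleO_of_koszul_relation (hd₁ : DifferentiableAt ℝ φ₁ 0)
    (hd₂ : DifferentiableAt ℝ φ₂ 0) (hrel : ∀ᶠ x in 𝓝 0, x.1 * φ₁ x + x.2 * φ₂ x = 0) :
    ∃ a : 𝕜, (fun x => φ₁ x + a * x.2) =o[𝓝 0] (fun x => x) ∧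
      (fun x => φ₂ x - a * x.1) =o[𝓝 0] (fun x => x) := by
  have hray := koszul_relation_along_ray hd₁.hasFDerivAt hd₂.hasFDerivAt hrel
  have hφ₁ : φ₁ 0 = 0 := by simpa using (hray (1, 0)).1
  have hφ₂ : φ₂ 0 = 0 := by simpa using (hray (0, 1)).1
  obtain ⟨a, ha⟩ := exists_koszul_multiple_of_fst_mul_add_snd_mul_eq_zero _ _ fun v => (hray v).2
  refine ⟨a, ?_, ?_⟩
  · simpa [hφ₁, (ha _).1] using hasFDerivAt_iff_isLittleO_nhds_zero.mp hd₁.hasFDerivAt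
  · simpa [hφ₂, (ha _).2] using hasFDerivAt_iff_isLittleO_nhds_zero.mp hd₂.hasFDerivAt

end Koszul

section KoszulQuotient

variable {𝕜 : Type*} [RCLike 𝕜] {r₁ r₂ : 𝕜 × 𝕜 → 𝕜}

/-- At the origin this is `0 / 0 = 0`. -/
noncomputable def koszulQuotient (r₁ r₂ : 𝕜 × 𝕜 → 𝕜) (x : 𝕜 × 𝕜) : 𝕜 :=
  (conj x.1 * r₂ x - conj x.2 * r₁ x) / (x.1 * conj x.1 + x.2 * conj x.2)

theorem mul_conj_fst_add_mul_conj_snd (x : 𝕜 × 𝕜) :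
    x.1 * conj x.1 + x.2 * conj x.2 = ((‖x.1‖ ^ 2 + ‖x.2‖ ^ 2 : ℝ) : 𝕜) := by
  simp [RCLike.mul_conj]

theorem mul_conj_fst_add_mul_conj_snd_ne_zero {x : 𝕜 × 𝕜} (hx : x ≠ 0) :
    x.1 * conj x.1 + x.2 * conj x.2 ≠ 0 := by
  rw [mul_conj_fst_add_mul_conj_snd, RCLike.ofReal_ne_zero]
  exact (pow_pos (norm_pos_iff.mpr hx) 2).trans_le
    (Prod.norm_sq_le_norm_fst_sq_add_norm_snd_sq x) |>.ne'

theorem koszulQuotient_spec {x : 𝕜 × 𝕜} (hx : x ≠ 0) (hrel : x.1 * r₁ x + x.2 * r₂ x = 0) :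
    r₁ x = -x.2 * koszulQuotient r₁ r₂ x ∧ r₂ x = x.1 * koszulQuotient r₁ r₂ x := by
  have hD := mul_conj_fst_add_mul_conj_snd_ne_zero hx
  constructor <;> rw [koszulQuotient, eq_comm, mul_div_assoc', div_eq_iff hD]
  · linear_combination -conj x.1 * hrel
  · linear_combination -conj x.2 * hrel

theorem continuousWithinAt_koszulQuotient {s : Set (𝕜 × 𝕜)} {x : 𝕜 × 𝕜} (hx : x ≠ 0)
    (h₁ : ContinuousWithinAt r₁ s x) (h₂ : ContinuousWithinAt r₂ s x) :
    ContinuousWithinAt (koszulQuotient r₁ r₂) s x :=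
  have hconj : Continuous (conj : 𝕜 → 𝕜) := RCLike.continuous_conj
  ContinuousWithinAt.div (by fun_prop) (by fun_prop) (mul_conj_fst_add_mul_conj_snd_ne_zero hx)

theorem tendsto_koszulQuotient_nhds_zero (h₁ : r₁ =o[𝓝 0] fun x => x)
    (h₂ : r₂ =o[𝓝 0] fun x => x) : Tendsto (koszulQuotient r₁ r₂) (𝓝 0) (𝓝 0) := by
  have hfst : (fun x : 𝕜 × 𝕜 => conj x.1) =O[𝓝 0] fun x => ‖x‖ :=
    IsBigO.of_bound 1 (Eventually.of_forall fun x => by simpa using norm_fst_le x)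
  have hsnd : (fun x : 𝕜 × 𝕜 => conj x.2) =O[𝓝 0] fun x => ‖x‖ :=
    IsBigO.of_bound 1 (Eventually.of_forall fun x => by simpa using norm_snd_le x)
  have hden : (fun x : 𝕜 × 𝕜 => ‖x‖ * ‖x‖) =O[𝓝 0]
      fun x => x.1 * conj x.1 + x.2 * conj x.2 :=
    IsBigO.of_bound 1 (Eventually.of_forall fun x => by
      rw [mul_conj_fst_add_mul_conj_snd, RCLike.norm_ofReal, norm_mul, norm_norm,
        abs_of_nonneg (by positivity), one_mul, ← sq]
      exact Prod.norm_sq_le_norm_fst_sq_add_norm_snd_sq x)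
  refine IsLittleO.tendsto_div_nhds_zero (IsLittleO.trans_isBigO ?_ hden)
  exact (hfst.mul_isLittleO (isLittleO_norm_right.mpr h₂)).sub
    (hsnd.mul_isLittleO (isLittleO_norm_right.mpr h₁))

theorem koszul_division_of_isLittleO {s : Set (𝕜 × 𝕜)} (hr₁ : ContinuousOn r₁ s)
    (hr₂ : ContinuousOn r₂ s) (h₁ : r₁ =o[𝓝 0] fun x => x) (h₂ : r₂ =o[𝓝 0] fun x => x)
    (hrel : ∀ x ∈ s, x.1 * r₁ x + x.2 * r₂ x = 0) :
    ContinuousOn (koszulQuotient r₁ r₂) s ∧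
      ∀ x ∈ s, r₁ x = -x.2 * koszulQuotient r₁ r₂ x ∧ r₂ x = x.1 * koszulQuotient r₁ r₂ x := by
  constructor
  · intro x hx
    rcases eq_or_ne x 0 with rfl | hx0
    · refine ContinuousAt.continuousWithinAt ?_
      simpa [ContinuousAt, koszulQuotient] using tendsto_koszulQuotient_nhds_zero h₁ h₂
    · exact continuousWithinAt_koszulQuotient hx0 (hr₁ x hx) (hr₂ x hx)
  · intro x hx
    rcases eq_or_ne x 0 with rfl | hx0
    · simp [h₁.isBigO.eq_zero_imp.self_of_nhds rfl, h₂.isBigO.eq_zero_imp.self_of_nhds rfl]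
    · exact koszulQuotient_spec hx0 (hrel x hx)

end KoszulQuotient

/-- If `φ = (φ₁, φ₂)` is a pair of `C¹` functions on a neighborhood `U` of
`0 ∈ ℂ²` satisfying `x₁·φ₁ + x₂·φ₂ = 0` on `U`, then there is a continuous `ψ` on a
possibly smaller neighborhood `V` of `0` with `φ₁ = -x₂·ψ` and `φ₂ = x₁·ψ` on `V`. -/
theorem koszul_division_C1_to_C0
    (U : Set (ℂ × ℂ)) (hU : IsOpen U) (h0 : (0 : ℂ × ℂ) ∈ U)
    (φ₁ φ₂ : ℂ × ℂ → ℂ)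
    (hφ₁ : ContDiffOn ℝ 1 φ₁ U) (hφ₂ : ContDiffOn ℝ 1 φ₂ U)
    (hrel : ∀ x ∈ U, x.1 * φ₁ x + x.2 * φ₂ x = 0) :
    ∃ (V : Set (ℂ × ℂ)) (ψ : ℂ × ℂ → ℂ),
      IsOpen V ∧ (0 : ℂ × ℂ) ∈ V ∧ V ⊆ U ∧ ContinuousOn ψ V ∧
      ∀ x ∈ V, φ₁ x = -x.2 * ψ x ∧ φ₂ x = x.1 * ψ x := by
  have hU0 : U ∈ 𝓝 0 := hU.mem_nhds h0
  obtain ⟨a, h₁, h₂⟩ := exists_isLittleO_of_koszul_relation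
    ((hφ₁.differentiableOn one_ne_zero).differentiableAt hU0)
    ((hφ₂.differentiableOn one_ne_zero).differentiableAt hU0) (eventually_of_mem hU0 hrel)
  obtain ⟨hcont, hdiv⟩ := koszul_division_of_isLittleO (r₁ := fun x => φ₁ x + a * x.2)
    (r₂ := fun x => φ₂ x - a * x.1) (hφ₁.continuousOn.add (by fun_prop))
    (hφ₂.continuousOn.sub (by fun_prop)) h₁ h₂
    fun x hx => by linear_combination hrel x hx
  refine ⟨U, fun x => a + koszulQuotient (fun x => φ₁ x + a * x.2) (fun x => φ₂ x - a * x.1) x,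
    hU, h0, subset_rfl, continuousOn_const.add hcont, fun x hx => ?_⟩
  obtain ⟨e₁, e₂⟩ := hdiv x hx
  constructor
  · linear_combination e₁
  · linear_combination e₂
end

section
/- Define φ : ℂ² \ {0} → ℂ² by φ(x) = (-x₂, x₁)/|x|^{1/3}, extended by φ(0) = 0. Then φ is continuous on ℂ², satisfies x₁·φ₁(x) + x₂·φ₂(x) = 0 for all x, but there is no continuous function ψ on any neighborhood of 0 in ℂ² such that φ₁(x) = -x₂·ψ(x) and φ₂(x) = x₁·ψ(x) for all x in that neighborhood. -/
/-!
Since `|φ(x)| ≤ |x| ^ (2/3)`, the map `φ` is continuous at the origin. A factorization `φ₂ = x₁ ψ`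
forces `ψ (t, 0) = t ^ (-1/3)` for `t > 0`, which is unbounded as `t → 0⁺`, so `ψ` cannot be
continuous at the origin.
-/

open Complex Filter Topology

section DivNormRpow

variable {E 𝕜 : Type*} [NormedAddCommGroup E] [RCLike 𝕜]

theorem norm_div_norm_rpow_le {u : E → 𝕜} (hu : ∀ x, ‖u x‖ ≤ ‖x‖) (x : E) (a : ℝ) :
    ‖u x / ((‖x‖ ^ a : ℝ) : 𝕜)‖ ≤ ‖x‖ ^ (1 - a) := by
  rcases eq_or_ne x 0 with rfl | hx
  · simp [norm_le_zero_iff.1 ((hu 0).trans_eq norm_zero), Real.rpow_nonneg]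
  have hpos : 0 < ‖x‖ := norm_pos_iff.2 hx
  calc ‖u x / ((‖x‖ ^ a : ℝ) : 𝕜)‖ = ‖u x‖ / ‖x‖ ^ a := by
        rw [norm_div, RCLike.norm_ofReal, abs_of_pos (Real.rpow_pos_of_pos hpos a)]
    _ ≤ ‖x‖ / ‖x‖ ^ a := by gcongr; exact hu x
    _ = ‖x‖ ^ (1 - a) := by rw [Real.rpow_sub hpos, Real.rpow_one]

theorem continuous_div_norm_rpow {a : ℝ} (ha : a < 1) {u : E → 𝕜} (hu : Continuous u)
    (hu_le : ∀ x, ‖u x‖ ≤ ‖x‖) : Continuous fun x => u x / ((‖x‖ ^ a : ℝ) : 𝕜) := by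
  rw [continuous_iff_continuousAt]
  intro x₀
  rcases eq_or_ne x₀ 0 with rfl | hx₀
  · have hlim : Tendsto (fun x : E => ‖x‖ ^ (1 - a)) (𝓝 0) (𝓝 0) := by
      simpa [Function.comp_def, Real.zero_rpow (sub_pos.2 ha).ne'] using
        ((Real.continuousAt_rpow_const 0 _ (Or.inr (sub_pos.2 ha).le)).tendsto.comp
          tendsto_norm_zero)
    simpa [ContinuousAt, norm_le_zero_iff.1 ((hu_le 0).trans_eq norm_zero)] using
      squeeze_zero_norm (norm_div_norm_rpow_le hu_le · a) hlim
  · have hden : ((‖x₀‖ ^ a : ℝ) : 𝕜) ≠ 0 := by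
      simpa using (Real.rpow_pos_of_pos (norm_pos_iff.2 hx₀) a).ne'
    exact hu.continuousAt.div (RCLike.continuous_ofReal.continuousAt.comp
      ((Real.continuousAt_rpow_const _ a (Or.inl (norm_ne_zero_iff.2 hx₀))).comp
        continuous_norm.continuousAt)) hden

end DivNormRpow

/-- At the origin `z / 0 = 0` gives the value `0`. -/
noncomputable def koszulDivRpow (a : ℝ) (x : ℂ × ℂ) : ℂ × ℂ :=
  (-x.2 / ((‖WithLp.toLp 2 x‖ ^ a : ℝ) : ℂ), x.1 / ((‖WithLp.toLp 2 x‖ ^ a : ℝ) : ℂ))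

theorem continuous_koszulDivRpow {a : ℝ} (ha : a < 1) : Continuous (koszulDivRpow a) := by
  have hL2 : Continuous (koszulDivRpow a ∘ WithLp.ofLp (p := 2)) :=
    continuous_prodMk.2
      ⟨continuous_div_norm_rpow ha (WithLp.continuous_snd ..).neg
        (fun y => by simpa using WithLp.norm_snd_le _ y),
      continuous_div_norm_rpow ha (WithLp.continuous_fst ..) (WithLp.norm_fst_le _)⟩
  exact hL2.comp (WithLp.prod_continuous_toLp 2 ℂ ℂ)

theorem koszulDivRpow_relation (a : ℝ) (x : ℂ × ℂ) :
    x.1 * (koszulDivRpow a x).1 + x.2 * (koszulDivRpow a x).2 = 0 := by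
  simp only [koszulDivRpow]
  ring

theorem koszulDivRpow_ofReal_snd (a : ℝ) {t : ℝ} (ht : 0 ≤ t) :
    (koszulDivRpow a ((t : ℂ), 0)).2 = t * ((t ^ (-a) : ℝ) : ℂ) := by
  simp [koszulDivRpow, abs_of_nonneg ht, Real.rpow_neg ht, div_eq_mul_inv]

theorem not_eventually_koszulDivRpow_snd_eq_mul {a : ℝ} (ha : 0 < a) {ψ : ℂ × ℂ → ℂ}
    (hψ : ContinuousAt ψ 0) : ¬ ∀ᶠ x in 𝓝 0, (koszulDivRpow a x).2 = x.1 * ψ x := by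
  intro hfac
  let c : ℝ → ℂ × ℂ := fun t => ((t : ℂ), 0)
  have hc : Tendsto c (𝓝[>] 0) (𝓝 0) :=
    ((by fun_prop : Continuous c).tendsto' 0 0 (by simp [c])).mono_left nhdsWithin_le_nhds
  have hψc : ∀ᶠ t in 𝓝[>] 0, t ^ (-a) = ‖ψ (c t)‖ := by
    filter_upwards [hc hfac, self_mem_nhdsWithin] with t hft (ht : 0 < t)
    have hψt : ψ (c t) = ((t ^ (-a) : ℝ) : ℂ) :=
      mul_left_cancel₀ (ofReal_ne_zero.2 ht.ne') (by rw [← hft, koszulDivRpow_ofReal_snd a ht.le])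
    rw [hψt, norm_real, Real.norm_of_nonneg (by positivity)]
  exact not_tendsto_atTop_of_tendsto_nhds (hψ.tendsto.comp hc).norm
    ((tendsto_rpow_neg_nhdsGT_zero (neg_lt_zero.2 ha)).congr' hψc)

/-- The map `φ(x) = (-x₂, x₁)/|x|^{1/3}` (with `φ(0) = 0`, `|x|` the Euclidean
norm) is continuous on `ℂ²` and satisfies `x₁·φ₁ + x₂·φ₂ = 0`, but there is no continuous
`ψ` on any neighborhood of `0` with `φ₁ = -x₂·ψ` and `φ₂ = x₁·ψ` there. -/
theorem continuous_relation_without_continuous_division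
    (φ : ℂ × ℂ → ℂ × ℂ)
    (hφdef : ∀ x : ℂ × ℂ, x ≠ 0 →
      φ x = (-x.2 / ((Real.sqrt (‖x.1‖ ^ 2 + ‖x.2‖ ^ 2) ^ ((1 : ℝ)/3) : ℝ) : ℂ),
             x.1 / ((Real.sqrt (‖x.1‖ ^ 2 + ‖x.2‖ ^ 2) ^ ((1 : ℝ)/3) : ℝ) : ℂ)))
    (hφ0 : φ 0 = 0) :
    Continuous φ ∧
    (∀ x : ℂ × ℂ, x.1 * (φ x).1 + x.2 * (φ x).2 = 0) ∧
    ¬ ∃ (V : Set (ℂ × ℂ)) (ψ : ℂ × ℂ → ℂ),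
        IsOpen V ∧ (0 : ℂ × ℂ) ∈ V ∧ ContinuousOn ψ V ∧
        ∀ x ∈ V, (φ x).1 = -x.2 * ψ x ∧ (φ x).2 = x.1 * ψ x := by
  have hφ : φ = koszulDivRpow (1 / 3) := by
    funext x
    rcases eq_or_ne x 0 with rfl | hx
    · simp [hφ0, koszulDivRpow, Prod.ext_iff]
    · rw [hφdef x hx, koszulDivRpow, WithLp.prod_norm_eq_of_L2]
      rfl
  subst hφ
  refine ⟨continuous_koszulDivRpow (by norm_num), koszulDivRpow_relation _, ?_⟩
  rintro ⟨V, ψ, hV, h0, hψ, hfac⟩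
  exact not_eventually_koszulDivRpow_snd_eq_mul (by norm_num) (hψ.continuousAt (hV.mem_nhds h0))
    (eventually_of_mem (hV.mem_nhds h0) fun x hx => (hfac x hx).2)
end

section
/- Let b be a smooth 1-form on an open set U ⊆ ℂⁿ and set v = b + b∧∂̄b + b∧(∂̄b)² + ⋯ + b∧(∂̄b)^{n−1}. If δ is an anti-derivation of degree −1 on forms (interior multiplication by a holomorphic vector field) with δb = 1 on U, and ∇ = δ − ∂̄, then ∇v = 1 on U, i.e., v = b/(∇b) formally satisfies ∇v = 1 wherever δb = 1. -/
/-!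
Put `c = ∂̄b`. Then `∂̄c = 0` and `δc = -∂̄(δb) = -∂̄1`, and `x · ∂̄1 = 0` for every form `x` on
which `∂̄` obeys a graded Leibniz rule. By induction on `k`, `b · δ(cᵏ) = 0 = b · ∂̄(cᵏ)`, so
`δ(b cᵏ) = cᵏ` and `∂̄(b cᵏ) = cᵏ⁺¹`, and `∇v = ∑ₖ (cᵏ - cᵏ⁺¹) = 1 - cⁿ = 1` telescopes.
-/

open Finset

section Antiderivation

variable {A : Type*} [Ring A] {f : A →+ A}

theorem mul_map_one_eq_zero_of_leibniz {x : A} (h : ∀ y, f (x * y) = f x * y + x * f y) :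
    x * f 1 = 0 := by
  simpa using (h 1).symm

theorem mul_map_one_eq_zero_of_antiLeibniz {x : A} (h : ∀ y, f (x * y) = f x * y - x * f y) :
    x * f 1 = 0 := by
  simpa using (h 1).symm

theorem mul_map_pow_succ_eq_zero {c : A} (hc : ∀ y, f (c * y) = f c * y + c * f y)
    (hcc : c * f c = 0) (k : ℕ) : ∀ y : A, y * f c = 0 → y * f (c ^ (k + 1)) = 0 := by
  induction k with
  | zero => simp
  | succ k ih =>
    intro y hy
    rw [pow_succ', hc, mul_add, ← mul_assoc, hy, zero_mul, ← mul_assoc, mul_assoc, ih c hcc,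
      mul_zero, add_zero]

theorem mul_map_pow_eq_zero {c y : A} (hc : ∀ y, f (c * y) = f c * y + c * f y)
    (hcc : c * f c = 0) (hy1 : y * f 1 = 0) (hyc : y * f c = 0) (k : ℕ) :
    y * f (c ^ k) = 0 := by
  cases k with
  | zero => simpa using hy1
  | succ k => exact mul_map_pow_succ_eq_zero hc hcc k y hyc

theorem map_mul_pow_of_antiLeibniz {b c : A} (hb : ∀ y, f (b * y) = f b * y - b * f y)
    (hc : ∀ y, f (c * y) = f c * y + c * f y) (hbc : b * f c = 0) (hcc : c * f c = 0)
    (k : ℕ) : f (b * c ^ k) = f b * c ^ k := by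
  rw [hb, mul_map_pow_eq_zero hc hcc (mul_map_one_eq_zero_of_antiLeibniz hb) hbc, sub_zero]

end Antiderivation

theorem nabla_of_bochner_martinelli_type_form_general
    (A : Type*) [Ring A] (Aev : Subsemiring A) (Aodd : AddSubgroup A)
    (δ D : A →+ A)
    (hδev : ∀ x ∈ Aev, ∀ y : A, δ (x * y) = δ x * y + x * δ y)
    (hδodd : ∀ x ∈ Aodd, ∀ y : A, δ (x * y) = δ x * y - x * δ y)
    (hDev : ∀ x ∈ Aev, ∀ y : A, D (x * y) = D x * y + x * D y)
    (hDodd : ∀ x ∈ Aodd, ∀ y : A, D (x * y) = D x * y - x * D y)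
    (hanti : ∀ x : A, δ (D x) = -D (δ x)) (hDD : ∀ x : A, D (D x) = 0)
    (n : ℕ)
    (b : A) (hb : b ∈ Aodd) (hDb : D b ∈ Aev)
    (hδb : δ b = 1)
    (htop : (D b) ^ n = 0)
    (v : A) (hv : v = ∑ k ∈ Finset.range n, b * (D b) ^ k) :
    δ v - D v = 1 := by
  set c := D b
  have hδc : δ c = -D 1 := by rw [hanti, hδb]
  have hbD1 : b * D 1 = 0 := mul_map_one_eq_zero_of_antiLeibniz (hDodd b hb)
  have hcD1 : c * D 1 = 0 := mul_map_one_eq_zero_of_leibniz (hDev c hDb)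
  have hδterm (k : ℕ) : δ (b * c ^ k) = c ^ k := by
    rw [map_mul_pow_of_antiLeibniz (hδodd b hb) (hδev c hDb) (by simp [hδc, hbD1])
      (by simp [hδc, hcD1]), hδb, one_mul]
  have hDterm (k : ℕ) : D (b * c ^ k) = c ^ (k + 1) := by
    rw [map_mul_pow_of_antiLeibniz (hDodd b hb) (hDev c hDb) (by simp [c, hDD])
      (by simp [c, hDD]), pow_succ']
  calc δ v - D v = ∑ k ∈ range n, (c ^ k - c ^ (k + 1)) := by
        simp only [hv, map_sum, ← sum_sub_distrib, hδterm, hDterm]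
    _ = 1 := by rw [sum_range_sub', pow_zero, htop, sub_zero]

/-- In the algebra of forms on `U ⊆ ℂⁿ` (abstractly: a ring `A` with even
part `Aev`, odd part `Aodd`, an anti-derivation `δ` of degree `−1` anticommuting with the
anti-derivation `∂̄ = D`, `D² = 0`), if `b` is a (smooth) 1-form with `δ b = 1` and
`v = b + b∧∂̄b + ⋯ + b∧(∂̄b)^{n−1}`, then `∇v = 1` for `∇ = δ − ∂̄`; the top term
`(∂̄b)^n` vanishes for degree reasons on `ℂⁿ`. -/
theorem nabla_of_bochner_martinelli_type_form
    (A : Type*) [Ring A] (Aev : Subsemiring A) (Aodd : AddSubgroup A)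
    (δ D : A →+ A)
    (hδev : ∀ x ∈ Aev, ∀ y : A, δ (x * y) = δ x * y + x * δ y)
    (hδodd : ∀ x ∈ Aodd, ∀ y : A, δ (x * y) = δ x * y - x * δ y)
    (hDev : ∀ x ∈ Aev, ∀ y : A, D (x * y) = D x * y + x * D y)
    (hDodd : ∀ x ∈ Aodd, ∀ y : A, D (x * y) = D x * y - x * D y)
    (hanti : ∀ x : A, δ (D x) = -D (δ x)) (hDD : ∀ x : A, D (D x) = 0)
    (n : ℕ) (hn : 1 ≤ n)
    (b : A) (hb : b ∈ Aodd) (hDb : D b ∈ Aev)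
    (hδb : δ b = 1)
    (htop : (D b) ^ n = 0)
    (v : A) (hv : v = ∑ k ∈ Finset.range n, b * (D b) ^ k) :
    δ v - D v = 1 :=
  nabla_of_bochner_martinelli_type_form_general A Aev Aodd δ D hδev hδodd hDev hDodd hanti hDD n b
    hb hDb hδb htop v hv
end
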